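/- arXiv:1605.09576 — 5 statements merged into one kernel-verified Lean document; each statement's English description precedes it below -/
import Mathlib

section
/- Let D = {(p,q,θ₁,θ₂) ∈ ℝ⁴ : |p| < π/2 and |q| < π/2} and define f : D → ℝ⁴ by f(p,q,θ₁,θ₂) = (R₁cos θ₁, R₁sin θ₁, R₂cos θ₂, R₂sin θ₂), where R₁ = (tan p + tan q)/2 and R₂ = (tan p − tan q)/2. Then at every point x = (p,q,θ₁,θ₂) ∈ D and for all v = (v₁,v₂,v₃,v₄), w = (w₁,w₂,w₃,w₄) ∈ ℝ⁴, one has cos²p · cos²q · B(Df_x(v), Df_x(w)) = (1/2)(v₁w₂ + v₂w₁) + (1/4)sin²(p+q)·v₃w₃ − (1/4)sin²(p−q)·v₄w₄, where Df_x denotes the Fréchet derivative of f at x. In other words, f pulls back the flat neutral metric B to the conformal multiple Ω⁻²·(dp dq + ¼sin²(p+q)dθ₁² − ¼sin²(p−q)dθ₂²) with conformal factor Ω = cos p cos q, which vanishes exactly when p = π/2 or |q| = π/2. -/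
/-- The flat neutral (signature (2,2)) bilinear form on ℝ⁴. -/
def neutralB (x y : ℝ × ℝ × ℝ × ℝ) : ℝ :=
  x.1 * y.1 + x.2.1 * y.2.1 - x.2.2.1 * y.2.2.1 - x.2.2.2 * y.2.2.2

/-- The compactification map f(p,q,θ₁,θ₂) = (R₁cos θ₁, R₁sin θ₁, R₂cos θ₂, R₂sin θ₂),
with R₁ = (tan p + tan q)/2 and R₂ = (tan p − tan q)/2. -/
noncomputable def compactify (x : ℝ × ℝ × ℝ × ℝ) : ℝ × ℝ × ℝ × ℝ :=
  (((Real.tan x.1 + Real.tan x.2.1) / 2) * Real.cos x.2.2.1,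
   ((Real.tan x.1 + Real.tan x.2.1) / 2) * Real.sin x.2.2.1,
   ((Real.tan x.1 - Real.tan x.2.1) / 2) * Real.cos x.2.2.2,
   ((Real.tan x.1 - Real.tan x.2.1) / 2) * Real.sin x.2.2.2)

/-!
`compactify` is the product of two polar-coordinate maps, with radii `R₁ = (tan p + tan q)/2`,
`R₂ = (tan p - tan q)/2` and angles `θ₁`, `θ₂`. Polar coordinates pull `dx² + dy²` back to
`dR² + R² dθ²`, so `B` pulls back to `dR₁² - dR₂² + R₁² dθ₁² - R₂² dθ₂²`. Since `R₁ + R₂ = tan p`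
and `R₁ - R₂ = tan q`, `dR₁² - dR₂² = d(tan p) d(tan q) = sec² p sec² q dp dq`, while
`cos p cos q · R₁ = sin (p + q) / 2` and `cos p cos q · R₂ = sin (p - q) / 2`.
-/

open Real

noncomputable def doublePolar (r₁ θ₁ r₂ θ₂ : ℝ) : ℝ × ℝ × ℝ × ℝ :=
  (r₁ * cos θ₁, r₁ * sin θ₁, r₂ * cos θ₂, r₂ * sin θ₂)

theorem cos_mul_cos_mul_tan_add_tan {p q : ℝ} (hp : cos p ≠ 0) (hq : cos q ≠ 0) :
    cos p * cos q * (tan p + tan q) = sin (p + q) := by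
  rw [tan_eq_sin_div_cos, tan_eq_sin_div_cos, sin_add]
  field_simp

theorem cos_mul_cos_mul_tan_sub_tan {p q : ℝ} (hp : cos p ≠ 0) (hq : cos q ≠ 0) :
    cos p * cos q * (tan p - tan q) = sin (p - q) := by
  rw [tan_eq_sin_div_cos, tan_eq_sin_div_cos, sin_sub]
  field_simp

theorem polar_pullback (r θ a b c d : ℝ) :
    (cos θ * a - r * sin θ * b) * (cos θ * c - r * sin θ * d)
      + (sin θ * a + r * cos θ * b) * (sin θ * c + r * cos θ * d) = a * c + r ^ 2 * b * d := by
  linear_combination (a * c + r ^ 2 * b * d) * sin_sq_add_cos_sq θ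

section DoublePolar

variable {E : Type*} [NormedAddCommGroup E] [NormedSpace ℝ E] {r θ : E → ℝ} {r' θ' : E →L[ℝ] ℝ}
  {x : E}

theorem HasFDerivAt.tan (hθ : HasFDerivAt θ θ' x) (hx : Real.cos (θ x) ≠ 0) :
    HasFDerivAt (fun y => Real.tan (θ y)) ((1 / Real.cos (θ x) ^ 2) • θ') x :=
  (hasDerivAt_tan hx).comp_hasFDerivAt x hθ

theorem HasFDerivAt.mul_cos (hr : HasFDerivAt r r' x) (hθ : HasFDerivAt θ θ' x) :
    HasFDerivAt (fun y => r y * Real.cos (θ y))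
      (Real.cos (θ x) • r' - (r x * Real.sin (θ x)) • θ') x := by
  refine (hr.fun_mul hθ.cos).congr_fderiv ?_
  ext v
  simp only [sub_apply, add_apply, smul_apply, smul_eq_mul]
  ring

theorem HasFDerivAt.mul_sin (hr : HasFDerivAt r r' x) (hθ : HasFDerivAt θ θ' x) :
    HasFDerivAt (fun y => r y * Real.sin (θ y))
      (Real.sin (θ x) • r' + (r x * Real.cos (θ x)) • θ') x := by
  refine (hr.fun_mul hθ.sin).congr_fderiv ?_
  ext v
  simp only [add_apply, smul_apply, smul_eq_mul]
  ring

theorem neutralB_fderiv_doublePolar {r₁ θ₁ r₂ θ₂ : E → ℝ} {r₁' θ₁' r₂' θ₂' : E →L[ℝ] ℝ}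
    (hr₁ : HasFDerivAt r₁ r₁' x) (hθ₁ : HasFDerivAt θ₁ θ₁' x)
    (hr₂ : HasFDerivAt r₂ r₂' x) (hθ₂ : HasFDerivAt θ₂ θ₂' x) (v w : E) :
    neutralB (fderiv ℝ (fun y => doublePolar (r₁ y) (θ₁ y) (r₂ y) (θ₂ y)) x v)
        (fderiv ℝ (fun y => doublePolar (r₁ y) (θ₁ y) (r₂ y) (θ₂ y)) x w) =
      r₁' v * r₁' w + r₁ x ^ 2 * θ₁' v * θ₁' w - (r₂' v * r₂' w + r₂ x ^ 2 * θ₂' v * θ₂' w) := by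
  have hf : HasFDerivAt (fun y => doublePolar (r₁ y) (θ₁ y) (r₂ y) (θ₂ y)) _ x :=
    (hr₁.mul_cos hθ₁).prodMk ((hr₁.mul_sin hθ₁).prodMk
      ((hr₂.mul_cos hθ₂).prodMk (hr₂.mul_sin hθ₂)))
  rw [hf.fderiv, ← polar_pullback (r₁ x) (θ₁ x), ← polar_pullback (r₂ x) (θ₂ x)]
  simp only [neutralB, ContinuousLinearMap.prod_apply, add_apply, sub_apply, smul_apply,
    smul_eq_mul]
  ring

end DoublePolar

/-- On the domain D = {|p| < π/2, |q| < π/2}, the map `compactify` pulls back the flat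
neutral metric to the conformal multiple of dp dq + ¼sin²(p+q)dθ₁² − ¼sin²(p−q)dθ₂²
with conformal factor Ω = cos p cos q. -/
theorem stmt0 (p q θ₁ θ₂ : ℝ) (hp : |p| < Real.pi / 2) (hq : |q| < Real.pi / 2)
    (v w : ℝ × ℝ × ℝ × ℝ) :
    Real.cos p ^ 2 * Real.cos q ^ 2 *
      neutralB (fderiv ℝ compactify (p, q, θ₁, θ₂) v)
               (fderiv ℝ compactify (p, q, θ₁, θ₂) w) =
      (1 / 2) * (v.1 * w.2.1 + v.2.1 * w.1)
        + (1 / 4) * Real.sin (p + q) ^ 2 * v.2.2.1 * w.2.2.1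
        - (1 / 4) * Real.sin (p - q) ^ 2 * v.2.2.2 * w.2.2.2 := by
  have hcp : cos p ≠ 0 := (cos_pos_of_mem_Ioo (abs_lt.mp hp)).ne'
  have hcq : cos q ≠ 0 := (cos_pos_of_mem_Ioo (abs_lt.mp hq)).ne'
  have htp : HasFDerivAt (𝕜 := ℝ) (fun x : ℝ × ℝ × ℝ × ℝ => tan x.1) _ (p, q, θ₁, θ₂) :=
    hasFDerivAt_fst.tan hcp
  have htq : HasFDerivAt (𝕜 := ℝ) (fun x : ℝ × ℝ × ℝ × ℝ => tan x.2.1) _ (p, q, θ₁, θ₂) :=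
    hasFDerivAt_snd.fst.tan hcq
  -- `compactify` is `doublePolar` of these radii and angles definitionally: `a / 2` is `a * 2⁻¹`.
  have hpullback : neutralB (fderiv ℝ compactify (p, q, θ₁, θ₂) v)
      (fderiv ℝ compactify (p, q, θ₁, θ₂) w) = _ :=
    neutralB_fderiv_doublePolar ((htp.fun_add htq).mul_const 2⁻¹) hasFDerivAt_snd.snd.fst
      ((htp.fun_sub htq).mul_const 2⁻¹) hasFDerivAt_snd.snd.snd v w
  rw [hpullback, ← cos_mul_cos_mul_tan_add_tan hcp hcq, ← cos_mul_cos_mul_tan_sub_tan hcp hcq]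
  simp only [smul_apply, add_apply, sub_apply, ContinuousLinearMap.coe_comp, Function.comp_apply,
    ContinuousLinearMap.coe_fst', ContinuousLinearMap.coe_snd', smul_eq_mul]
  field_simp
  ring
end

section
/- Identify ℝ⁴ with ℂ² via (z₁,z₂), and define Ω : ℂ² \ {0} → ℝ by Ω(z₁,z₂) = cos(ρ)·cos((|z₂|² − |z₁|²)/ρ), where ρ = √(|z₁|² + |z₂|²). Then for every point (z₁,z₂) on the 3-sphere ρ = π/2, the Fréchet derivative of Ω at (z₁,z₂) vanishes if and only if z₁ = 0 or z₂ = 0. (Thus the gradient of the conformal factor vanishes on the boundary 3-sphere of radius π/2 precisely on the two core circles {(z₁,0) : |z₁| = π/2} and {(0,z₂) : |z₂| = π/2}, which form a Hopf link.) -/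
/-!
On the sphere `p = π/2` the factor `cos p` of `Ω = cos p · cos q` vanishes, so the product rule
leaves `dΩ = -sin p · cos q · dp = -cos q · dp`. By Euler's identity `dp_z(z) = p(z)`, so `dp ≠ 0`
and `dΩ` vanishes iff `cos q = 0`. Since `|q| = ||z₂|² - |z₁|²| / p ≤ p = π/2`, this happens iff
`||z₂|² - |z₁|²| = |z₁|² + |z₂|²`, i.e. iff `z₁ = 0` or `z₂ = 0`.
-/

/-- The conformal factor Ω of the conformal compactification of ℝ^{2,2}, expressed in the
ball coordinates (z₁,z₂) ∈ ℂ²: Ω(z₁,z₂) = cos(ρ)·cos((|z₂|² − |z₁|²)/ρ) with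
ρ = √(|z₁|² + |z₂|²). -/
noncomputable def confFactor (z : ℂ × ℂ) : ℝ :=
  Real.cos (Real.sqrt (‖z.1‖ ^ 2 + ‖z.2‖ ^ 2)) *
    Real.cos ((‖z.2‖ ^ 2 - ‖z.1‖ ^ 2) /
      Real.sqrt (‖z.1‖ ^ 2 + ‖z.2‖ ^ 2))

open Real

theorem HasFDerivAt.mul_of_left_eq_zero {𝕜 E : Type*} [NontriviallyNormedField 𝕜]
    [NormedAddCommGroup E] [NormedSpace 𝕜 E] {f g : E → 𝕜} {f' : E →L[𝕜] 𝕜} {x : E}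
    (hf : HasFDerivAt f f' x) (hg : DifferentiableAt 𝕜 g x) (hfx : f x = 0) :
    HasFDerivAt (fun y => f y * g y) (g x • f') x :=
  (hf.mul hg.hasFDerivAt).congr_fderiv (by ext; simp [hfx])

theorem Real.cos_eq_zero_iff_abs_eq_pi_div_two {x : ℝ} (hx : |x| ≤ π / 2) :
    cos x = 0 ↔ |x| = π / 2 := by
  rw [← cos_abs]
  refine ⟨fun hcos => hx.eq_of_not_lt fun hlt => ?_, fun habs => habs ▸ cos_pi_div_two⟩
  have : 0 < cos |x| := cos_pos_of_mem_Ioo ⟨by linarith [pi_pos, abs_nonneg x], hlt⟩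
  exact this.ne' hcos

lemma abs_sub_eq_add_iff {a b : ℝ} (ha : 0 ≤ a) (hb : 0 ≤ b) : |b - a| = a + b ↔ a = 0 ∨ b = 0 := by
  rw [abs_eq (by positivity)]
  constructor
  · rintro (h | h)
    · exact .inl (by linarith)
    · exact .inr (by linarith)
  · rintro (rfl | rfl)
    · exact .inl (by ring)
    · exact .inr (by ring)

lemma cos_normSq_sub_div_eq_zero_iff {z₁ z₂ : ℂ} (h : ‖z₁‖ ^ 2 + ‖z₂‖ ^ 2 = (π / 2) ^ 2) :
    cos ((‖z₂‖ ^ 2 - ‖z₁‖ ^ 2) / (π / 2)) = 0 ↔ z₁ = 0 ∨ z₂ = 0 := by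
  have hr : 0 < π / 2 := by positivity
  have hsum : |‖z₂‖ ^ 2 - ‖z₁‖ ^ 2| ≤ ‖z₁‖ ^ 2 + ‖z₂‖ ^ 2 :=
    abs_sub_le_iff.mpr ⟨by linarith [sq_nonneg ‖z₁‖], by linarith [sq_nonneg ‖z₂‖]⟩
  rw [cos_eq_zero_iff_abs_eq_pi_div_two, abs_div, abs_of_pos hr, div_eq_iff hr.ne', ← sq, ← h,
    abs_sub_eq_add_iff (by positivity) (by positivity)]
  · simp
  · rw [abs_div, abs_of_pos hr, div_le_iff₀ hr, ← sq, ← h]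
    exact hsum

-- The Euclidean norm `p` of the ball coordinates; the norm of `ℂ × ℂ` itself is the sup norm.
noncomputable def radius (z : ℂ × ℂ) : ℝ := √(‖z.1‖ ^ 2 + ‖z.2‖ ^ 2)

lemma hasFDerivAt_radius {z : ℂ × ℂ} (hz : radius z ≠ 0) :
    HasFDerivAt radius ((1 / (2 * radius z)) •
      ((2 • innerSL ℝ z.1).comp (.fst ℝ ℂ ℂ) + (2 • innerSL ℝ z.2).comp (.snd ℝ ℂ ℂ))) z :=
  (hasFDerivAt_fst.norm_sq.add hasFDerivAt_snd.norm_sq).sqrt fun h => hz <| by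
    simp only [Pi.add_apply] at h
    simp [radius, h]

lemma fderiv_radius_apply_self {z : ℂ × ℂ} (hz : radius z ≠ 0) :
    fderiv ℝ radius z z = radius z := by
  have hsq : radius z ^ 2 = ‖z.1‖ ^ 2 + ‖z.2‖ ^ 2 := sq_sqrt (by positivity)
  rw [(hasFDerivAt_radius hz).fderiv]
  simp only [smul_apply, add_apply, ContinuousLinearMap.comp_apply, ContinuousLinearMap.coe_fst',
    ContinuousLinearMap.coe_snd', innerSL_apply_apply, real_inner_self_eq_norm_sq, smul_eq_mul]
  field_simp
  linear_combination (-2) * hsq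

lemma differentiableAt_cos_normSq_sub_div_radius {z : ℂ × ℂ} (hz : radius z ≠ 0) :
    DifferentiableAt ℝ (fun w : ℂ × ℂ => cos ((‖w.2‖ ^ 2 - ‖w.1‖ ^ 2) / radius w)) z := by
  have hdiff : DifferentiableAt ℝ (fun w : ℂ × ℂ => ‖w.2‖ ^ 2 - ‖w.1‖ ^ 2) z :=
    (hasFDerivAt_snd.norm_sq.sub hasFDerivAt_fst.norm_sq).differentiableAt
  have hrad := (hasFDerivAt_radius hz).differentiableAt
  fun_prop (disch := exact hz)

lemma hasFDerivAt_confFactor {z : ℂ × ℂ} (hz : radius z = π / 2) :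
    HasFDerivAt confFactor
      (-cos ((‖z.2‖ ^ 2 - ‖z.1‖ ^ 2) / radius z) • fderiv ℝ radius z) z := by
  have hz₀ : radius z ≠ 0 := by rw [hz]; positivity
  have hcos := (hasFDerivAt_radius hz₀).differentiableAt.hasFDerivAt.cos
  rw [hz, sin_pi_div_two] at hcos
  refine (hcos.mul_of_left_eq_zero (differentiableAt_cos_normSq_sub_div_radius hz₀)
    (by rw [hz, cos_pi_div_two])).congr_fderiv ?_
  rw [smul_smul, mul_neg_one]

lemma fderiv_confFactor_eq_zero_iff {z : ℂ × ℂ} (hz : radius z = π / 2) :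
    fderiv ℝ confFactor z = 0 ↔ cos ((‖z.2‖ ^ 2 - ‖z.1‖ ^ 2) / (π / 2)) = 0 := by
  have hz₀ : radius z ≠ 0 := by rw [hz]; positivity
  have hρ : fderiv ℝ radius z ≠ 0 := fun h0 => hz₀ <| by
    rw [← fderiv_radius_apply_self hz₀, h0, zero_apply]
  rw [(hasFDerivAt_confFactor hz).fderiv, smul_eq_zero, neg_eq_zero, or_iff_left hρ, hz]

/-- On the boundary 3-sphere ρ = π/2, the derivative of the conformal factor vanishes
precisely on the Hopf link {z₁ = 0} ∪ {z₂ = 0}. -/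
theorem stmt2 (z₁ z₂ : ℂ)
    (h : Real.sqrt (‖z₁‖ ^ 2 + ‖z₂‖ ^ 2) = Real.pi / 2) :
    fderiv ℝ confFactor (z₁, z₂) = 0 ↔ z₁ = 0 ∨ z₂ = 0 := by
  have hsq : ‖z₁‖ ^ 2 + ‖z₂‖ ^ 2 = (π / 2) ^ 2 := by rw [← h, sq_sqrt (by positivity)]
  rw [fderiv_confFactor_eq_zero_iff (z := (z₁, z₂)) h]
  exact cos_normSq_sub_div_eq_zero_iff hsq
end

section
/- Let ψ ∈ ℝ, σ ∈ ℂ and A, B ∈ ℝ, and assume ψ + σe^{2iA} ≠ 0. Then Im[(σ + ψe^{−2iA})e^{2iB} + σe^{2iA}] = 0 if and only if either e^{2iB} = −e^{2iA}, or (ψ + σe^{2iA})·e^{2iB} = e^{2iA}·(ψ + σ̄e^{−2iA}). -/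
/- With `u = e^{2iA}` and `w = e^{2iB}` on the unit circle, `u w (z - z̄)` factors as
`(w + u)((ψ + σu)w - u(ψ + σ̄u⁻¹))` for `z = (σ + ψu⁻¹)w + σu`; since `uw ≠ 0`, `Im z = 0`
holds exactly when one of the two factors vanishes. -/

open Complex ComplexConjugate

lemma mul_sub_conj_factorization (ψ : ℝ) (σ : ℂ) {u w : ℂ} (hu : ‖u‖ = 1) (hw : ‖w‖ = 1) :
    u * w * ((σ + ψ * u⁻¹) * w + σ * u - conj ((σ + ψ * u⁻¹) * w + σ * u)) =
      (w + u) * ((ψ + σ * u) * w - u * (ψ + conj σ * u⁻¹)) := by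
  have hu₀ : u ≠ 0 := norm_ne_zero_iff.mp (by simp [hu])
  have hw₀ : w ≠ 0 := norm_ne_zero_iff.mp (by simp [hw])
  simp only [map_add, map_mul, conj_ofReal, map_inv₀, ← inv_eq_conj hu, ← inv_eq_conj hw,
    inv_inv]
  field_simp
  ring

theorem im_eq_zero_iff_of_norm_eq_one (ψ : ℝ) (σ : ℂ) {u w : ℂ} (hu : ‖u‖ = 1) (hw : ‖w‖ = 1) :
    ((σ + ψ * u⁻¹) * w + σ * u).im = 0 ↔
      w = -u ∨ (ψ + σ * u) * w = u * (ψ + conj σ * u⁻¹) := by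
  have huw : u * w ≠ 0 := norm_ne_zero_iff.mp (by simp [hu, hw])
  rw [← conj_eq_iff_im, eq_comm, ← sub_eq_zero, ← mul_right_inj' huw, mul_zero,
    mul_sub_conj_factorization ψ σ hu hw, mul_eq_zero, add_eq_zero_iff_eq_neg, sub_eq_zero]

lemma norm_exp_two_mul_ofReal_mul_I (x : ℝ) : ‖exp (2 * (x : ℂ) * I)‖ = 1 := by
  exact_mod_cast norm_exp_ofReal_mul_I (2 * x)

theorem stmt4_general (ψ : ℝ) (σ : ℂ) (A B : ℝ) :
    ((σ + (ψ : ℂ) * Complex.exp (-(2 * (A : ℂ)) * Complex.I)) *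
        Complex.exp (2 * (B : ℂ) * Complex.I) +
      σ * Complex.exp (2 * (A : ℂ) * Complex.I)).im = 0 ↔
    (Complex.exp (2 * (B : ℂ) * Complex.I) = -Complex.exp (2 * (A : ℂ) * Complex.I) ∨
      ((ψ : ℂ) + σ * Complex.exp (2 * (A : ℂ) * Complex.I)) *
          Complex.exp (2 * (B : ℂ) * Complex.I) =
        Complex.exp (2 * (A : ℂ) * Complex.I) *
          ((ψ : ℂ) + (starRingEnd ℂ) σ * Complex.exp (-(2 * (A : ℂ)) * Complex.I))) := by
  rw [neg_mul, exp_neg]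
  exact im_eq_zero_iff_of_norm_eq_one ψ σ (norm_exp_two_mul_ofReal_mul_I A)
    (norm_exp_two_mul_ofReal_mul_I B)

/-- The algebraic core of the Lemma characterizing null tangent vectors of the tangent
hypersurface H(S): assuming ψ + σe^{2iA} ≠ 0,
Im[(σ + ψe^{−2iA})e^{2iB} + σe^{2iA}] = 0 iff either e^{2iB} = −e^{2iA} (β-plane), or
(ψ + σe^{2iA})e^{2iB} = e^{2iA}(ψ + σ̄e^{−2iA}) (α-plane). -/
theorem stmt4 (ψ : ℝ) (σ : ℂ) (A B : ℝ)
    (h : (ψ : ℂ) + σ * Complex.exp (2 * (A : ℂ) * Complex.I) ≠ 0) :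
    ((σ + (ψ : ℂ) * Complex.exp (-(2 * (A : ℂ)) * Complex.I)) *
        Complex.exp (2 * (B : ℂ) * Complex.I) +
      σ * Complex.exp (2 * (A : ℂ) * Complex.I)).im = 0 ↔
    (Complex.exp (2 * (B : ℂ) * Complex.I) = -Complex.exp (2 * (A : ℂ) * Complex.I) ∨
      ((ψ : ℂ) + σ * Complex.exp (2 * (A : ℂ) * Complex.I)) *
          Complex.exp (2 * (B : ℂ) * Complex.I) =
        Complex.exp (2 * (A : ℂ) * Complex.I) *
          ((ψ : ℂ) + (starRingEnd ℂ) σ * Complex.exp (-(2 * (A : ℂ)) * Complex.I))) :=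
  stmt4_general ψ σ A B
end

section
/- Let E = ℝ³ with the Euclidean inner product, let c ∈ E, let r₁ ≥ r₂ > 0, and let u ∈ E with ‖u‖ = 1. Then there exists q ∈ E such that the line {q + tu : t ∈ ℝ} is tangent to both the sphere of radius r₁ centred at 0 and the sphere of radius r₂ centred at c — i.e. ‖q − ⟨q,u⟩u‖ = r₁ and ‖(q−c) − ⟨q−c,u⟩u‖ = r₂ — if and only if r₁ − r₂ ≤ ‖c − ⟨c,u⟩u‖ ≤ r₁ + r₂. -/
open scoped RealInnerProductSpace
open Module Submodule

/-!
Projecting orthogonally to `u`, the line `q + ℝu` becomes the point `p = Pq` of the plane `uᗮ`,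
and tangency to the two spheres says `‖p‖ = r₁` and `‖p - Pc‖ = r₂`: the point `p` lies on two
coplanar circles whose centres are at distance `L = ‖Pc‖`. Such circles meet iff
`|r₁ - r₂| ≤ L ≤ r₁ + r₂`. Necessity is the triangle inequality; for sufficiency, place `p` at
abscissa `(L² + r₁² - r₂²) / (2L)` on the axis of centres and at the height given by Pythagoras
along a unit vector of `uᗮ` orthogonal to `Pc`, which exists because `uᗮ` is a plane.
-/

theorem exists_sq_add_sq_eq_of_abs_sub_le {r₁ r₂ L : ℝ} (h₁ : |r₁ - r₂| ≤ L)
    (h₂ : L ≤ r₁ + r₂) :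
    ∃ a b : ℝ, (a * L) ^ 2 + b ^ 2 = r₁ ^ 2 ∧ ((a - 1) * L) ^ 2 + b ^ 2 = r₂ ^ 2 := by
  obtain ⟨hlo, hhi⟩ := abs_sub_le_iff.1 h₁
  rcases eq_or_ne L 0 with rfl | hL
  · exact ⟨0, r₁, by ring, by nlinarith⟩
  -- subtracting the two circle equations determines `a`
  obtain ⟨a, haL⟩ : ∃ a, 2 * a * L ^ 2 = L ^ 2 + r₁ ^ 2 - r₂ ^ 2 :=
    ⟨(L ^ 2 + r₁ ^ 2 - r₂ ^ 2) / (2 * L ^ 2), by field_simp⟩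
  have hb : (a * L) ^ 2 ≤ r₁ ^ 2 := by
    have hL2 : 0 < 4 * L ^ 2 := by positivity
    refine le_of_mul_le_mul_left ?_ hL2
    -- `4 L² (r₁² - (a L)²)` is the Heron-type product of the two factors below
    have hfar : 0 ≤ (r₁ + r₂) ^ 2 - L ^ 2 := by nlinarith
    have hnear : 0 ≤ L ^ 2 - (r₁ - r₂) ^ 2 := by nlinarith
    nlinarith [mul_nonneg hfar hnear]
  refine ⟨a, √(r₁ ^ 2 - (a * L) ^ 2), ?_, ?_⟩ <;> rw [Real.sq_sqrt (sub_nonneg.2 hb)]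
  · ring
  · linear_combination (-1 : ℝ) * haL

variable {E : Type*} [NormedAddCommGroup E] [InnerProductSpace ℝ E]

theorem norm_smul_add_smul_sq {d w : E} (hdw : ⟪d, w⟫ = 0) (hw : ‖w‖ = 1) (a b : ℝ) :
    ‖a • d + b • w‖ ^ 2 = (a * ‖d‖) ^ 2 + b ^ 2 := by
  have h : ⟪a • d, b • w⟫ = 0 := by simp [real_inner_smul_left, real_inner_smul_right, hdw]
  rw [sq, norm_add_sq_eq_norm_sq_add_norm_sq_real h, norm_smul, norm_smul, hw]
  simp only [Real.norm_eq_abs, mul_one]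
  rw [mul_mul_mul_comm, abs_mul_abs_self, abs_mul_abs_self]
  ring

theorem exists_mem_norm_eq_norm_sub_eq {K : Submodule ℝ E} {d w : E} (hd : d ∈ K) (hwK : w ∈ K)
    (hdw : ⟪d, w⟫ = 0) (hw : ‖w‖ = 1) {r₁ r₂ : ℝ} (h₁ : |r₁ - r₂| ≤ ‖d‖) (h₂ : ‖d‖ ≤ r₁ + r₂) :
    ∃ p ∈ K, ‖p‖ = r₁ ∧ ‖p - d‖ = r₂ := by
  obtain ⟨a, b, ha, hb⟩ := exists_sq_add_sq_eq_of_abs_sub_le h₁ h₂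
  obtain ⟨hr₁, hr₂⟩ : 0 ≤ r₁ ∧ 0 ≤ r₂ := by
    constructor <;> linarith [abs_sub_le_iff.1 (h₁.trans h₂)]
  have hsub : a • d + b • w - d = (a - 1) • d + b • w := by rw [sub_smul, one_smul]; abel
  refine ⟨a • d + b • w, K.add_mem (K.smul_mem a hd) (K.smul_mem b hwK), ?_, ?_⟩
  · rw [← sq_eq_sq₀ (norm_nonneg _) hr₁, norm_smul_add_smul_sq hdw hw, ha]
  · rw [← sq_eq_sq₀ (norm_nonneg _) hr₂, hsub, norm_smul_add_smul_sq hdw hw, hb]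

theorem exists_norm_eq_one_forall_inner_eq_zero [FiniteDimensional ℝ E] (s : Finset E)
    (hs : s.card < finrank ℝ E) : ∃ w : E, ‖w‖ = 1 ∧ ∀ v ∈ s, ⟪v, w⟫ = 0 := by
  have hK : span ℝ (s : Set E) ≠ ⊤ := fun h => by
    have := finrank_span_finset_le_card (R := ℝ) s
    rw [Set.finrank, h, finrank_top] at this
    omega
  obtain ⟨w, hwK, hw⟩ := exists_mem_ne_zero_of_ne_bot (mt orthogonal_eq_bot_iff.1 hK)
  refine ⟨‖w‖⁻¹ • w, norm_smul_inv_norm hw, fun v hv => ?_⟩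
  rw [real_inner_smul_right, inner_right_of_mem_orthogonal (subset_span hv) hwK, mul_zero]

theorem exists_mem_orthogonal_singleton_inner_eq_zero [FiniteDimensional ℝ E]
    (hE : 2 < finrank ℝ E) (u d : E) :
    ∃ w ∈ (ℝ ∙ u)ᗮ, ⟪d, w⟫ = 0 ∧ ‖w‖ = 1 := by
  classical
  obtain ⟨w, hw, hsw⟩ := exists_norm_eq_one_forall_inner_eq_zero {u, d}
    ((Finset.card_le_two).trans_lt hE)
  exact ⟨w, mem_orthogonal_singleton_iff_inner_right.2 (hsw u (by simp)), hsw d (by simp), hw⟩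

theorem starProjection_orthogonal_unit_singleton {u : E} (hu : ‖u‖ = 1) (x : E) :
    (ℝ ∙ u)ᗮ.starProjection x = x - ⟪x, u⟫ • u := by
  rw [starProjection_orthogonal_val, starProjection_unit_singleton ℝ hu, real_inner_comm]

theorem exists_norm_starProjection_eq_iff (K : Submodule ℝ E) [K.HasOrthogonalProjection]
    (hK : ∀ d ∈ K, ∃ w ∈ K, ⟪d, w⟫ = 0 ∧ ‖w‖ = 1) (c : E) (r₁ r₂ : ℝ) :
    (∃ q, ‖K.starProjection q‖ = r₁ ∧ ‖K.starProjection (q - c)‖ = r₂) ↔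
      |r₁ - r₂| ≤ ‖K.starProjection c‖ ∧ ‖K.starProjection c‖ ≤ r₁ + r₂ := by
  set d := K.starProjection c
  constructor
  · rintro ⟨q, rfl, rfl⟩
    rw [map_sub]
    refine ⟨?_, ?_⟩
    · simpa using abs_norm_sub_norm_le (K.starProjection q) (K.starProjection q - d)
    · simpa using norm_sub_le (K.starProjection q) (K.starProjection q - d)
  · rintro ⟨h₁, h₂⟩
    obtain ⟨w, hwK, hdw, hw⟩ := hK d (K.starProjection_apply_mem c)
    obtain ⟨p, hpK, hp₁, hp₂⟩ :=
      exists_mem_norm_eq_norm_sub_eq (K.starProjection_apply_mem c) hwK hdw hw h₁ h₂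
    have hPp : K.starProjection p = p := starProjection_eq_self_iff.2 hpK
    exact ⟨p, by rwa [hPp], by rwa [map_sub, hPp]⟩

theorem stmt12_general (r₁ r₂ : ℝ) (h12 : r₁ ≥ r₂)
    (c u : EuclideanSpace ℝ (Fin 3)) (hu : ‖u‖ = 1) :
    (∃ q : EuclideanSpace ℝ (Fin 3),
        ‖q - ⟪q, u⟫ • u‖ = r₁ ∧ ‖(q - c) - ⟪q - c, u⟫ • u‖ = r₂) ↔
      (r₁ - r₂ ≤ ‖c - ⟪c, u⟫ • u‖ ∧ ‖c - ⟪c, u⟫ • u‖ ≤ r₁ + r₂) := by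
  have hK : ∀ d ∈ (ℝ ∙ u)ᗮ, ∃ w ∈ (ℝ ∙ u)ᗮ, ⟪d, w⟫ = 0 ∧ ‖w‖ = 1 := fun d _ =>
    exists_mem_orthogonal_singleton_inner_eq_zero (by simp) u d
  have h := exists_norm_starProjection_eq_iff (ℝ ∙ u)ᗮ hK c r₁ r₂
  simp only [starProjection_orthogonal_unit_singleton hu] at h
  rwa [abs_of_nonneg (sub_nonneg.2 h12)] at h

/-- A line {q + tu} with unit direction u is tangent to both the sphere of radius r₁
centred at 0 and the sphere of radius r₂ centred at c for some base point q iff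
r₁ − r₂ ≤ ‖c − ⟨c,u⟩u‖ ≤ r₁ + r₂. -/
theorem stmt12 (r₁ r₂ : ℝ) (h12 : r₁ ≥ r₂) (h2 : 0 < r₂)
    (c u : EuclideanSpace ℝ (Fin 3)) (hu : ‖u‖ = 1) :
    (∃ q : EuclideanSpace ℝ (Fin 3),
        ‖q - ⟪q, u⟫ • u‖ = r₁ ∧ ‖(q - c) - ⟪q - c, u⟫ • u‖ = r₂) ↔
      (r₁ - r₂ ≤ ‖c - ⟪c, u⟫ • u‖ ∧ ‖c - ⟪c, u⟫ • u‖ ≤ r₁ + r₂) :=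
  stmt12_general r₁ r₂ h12 c u hu
end

section
/- Let E = ℝ³ with the Euclidean inner product, let r₁ ≥ r₂ > 0 and let c ∈ E with ‖c‖ > r₁ + r₂ (so the spheres are disjoint and lie outside one another). Then the set M = {(u,q) ∈ E × E : ‖u‖ = 1, ⟨q,u⟩ = 0, ‖q‖ = r₁, ‖(q−c) − ⟨q−c,u⟩u‖ = r₂}, with the subspace topology of E × E, is homeomorphic to the disjoint union of two copies of the 2-torus S¹ × S¹ (where S¹ denotes the unit circle in ℝ²). -/
/-!
Send `c` to `‖c‖ e₃` by a reflection. For a common tangent `(u, q)` the tangency to the second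
sphere reads `⟪c, u⟫² = ‖c‖² - 2⟪q, c⟫ + r₁² - r₂² ≥ (‖c‖ - r₁)² - r₂² > 0`, so `⟪c, u⟫` never
vanishes and reversing `u` swaps the lines with `⟪c, u⟫ > 0` and those with `⟪c, u⟫ < 0`.
The former are parametrised by `S¹ × S¹`: one circle records the latitude of `q` together with
the component of `u` along the parallel through `q`, the other the longitude of `q`; the inverse
is given by explicit rational formulas. A continuous bijection from the compact
`(S¹ × S¹) ⊕ (S¹ × S¹)` onto a Hausdorff space is a homeomorphism.
-/

open scoped RealInnerProductSpace

section General

variable {E F : Type*} [NormedAddCommGroup E] [InnerProductSpace ℝ E]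
  [NormedAddCommGroup F] [InnerProductSpace ℝ F]

def commonTangents (r₁ r₂ : ℝ) (c : E) : Set (E × E) :=
  {p | ‖p.1‖ = 1 ∧ ⟪p.2, p.1⟫ = 0 ∧ ‖p.2‖ = r₁ ∧ ‖(p.2 - c) - ⟪p.2 - c, p.1⟫ • p.1‖ = r₂}

variable {r₁ r₂ : ℝ} {c u q : E}

theorem norm_sub_inner_smul_sq_of_norm_eq_one (v : E) (hu : ‖u‖ = 1) :
    ‖v - ⟪v, u⟫ • u‖ ^ 2 = ‖v‖ ^ 2 - ⟪v, u⟫ ^ 2 := by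
  rw [norm_sub_sq_real, real_inner_smul_right, norm_smul, Real.norm_eq_abs, hu, mul_one, sq_abs]
  ring

theorem mem_commonTangents_iff (hr₂ : 0 ≤ r₂) :
    (u, q) ∈ commonTangents r₁ r₂ c ↔ ‖u‖ = 1 ∧ ⟪q, u⟫ = 0 ∧ ‖q‖ = r₁ ∧
      ⟪c, u⟫ ^ 2 = ‖c‖ ^ 2 - 2 * ⟪q, c⟫ + r₁ ^ 2 - r₂ ^ 2 := by
  refine and_congr_right fun hu => and_congr_right fun hqu => and_congr_right fun hq => ?_
  rw [← sq_eq_sq₀ (norm_nonneg _) hr₂, norm_sub_inner_smul_sq_of_norm_eq_one _ hu,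
    norm_sub_sq_real, inner_sub_left, hqu, hq]
  constructor <;> intro h <;> dsimp only at h ⊢ <;> linarith

theorem neg_fst_mem_commonTangents (h : (u, q) ∈ commonTangents r₁ r₂ c) :
    (-u, q) ∈ commonTangents r₁ r₂ c := by
  obtain ⟨hu, hqu, hq, hd⟩ := h
  refine ⟨by rwa [norm_neg], by rw [inner_neg_right, hqu, neg_zero], hq, ?_⟩
  rwa [inner_neg_right, neg_smul, smul_neg, neg_neg]

theorem LinearIsometryEquiv.map_mem_commonTangents_iff (Φ : E ≃ₗᵢ[ℝ] F) :
    (Φ u, Φ q) ∈ commonTangents r₁ r₂ (Φ c) ↔ (u, q) ∈ commonTangents r₁ r₂ c := by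
  simp only [commonTangents, Set.mem_ofPred_eq, ← map_sub, Φ.inner_map_map, ← map_smul,
    Φ.norm_map]

def LinearIsometryEquiv.commonTangentsHomeomorph (Φ : E ≃ₗᵢ[ℝ] F) (r₁ r₂ : ℝ) (c : E) :
    commonTangents r₁ r₂ c ≃ₜ commonTangents r₁ r₂ (Φ c) :=
  (Φ.toHomeomorph.prodCongr Φ.toHomeomorph).subtype fun _ => Φ.map_mem_commonTangents_iff.symm

theorem inner_ne_zero_of_mem_commonTangents (hr₂ : 0 ≤ r₂) (hc : r₁ + r₂ < ‖c‖)
    (h : (u, q) ∈ commonTangents r₁ r₂ c) : ⟪c, u⟫ ≠ 0 := by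
  obtain ⟨-, -, hq, hcu⟩ := (mem_commonTangents_iff hr₂).1 h
  have hqc : ⟪q, c⟫ ≤ r₁ * ‖c‖ := hq ▸ real_inner_le_norm q c
  have : 0 < ⟪c, u⟫ ^ 2 := by nlinarith
  exact pow_ne_zero_iff two_ne_zero |>.1 this.ne'

end General

noncomputable section

namespace CommonTangents

abbrev E3 := EuclideanSpace ℝ (Fin 3)

theorem mem_commonTangents_single_iff {r₁ r₂ l : ℝ} (hr₁ : 0 ≤ r₁) (hr₂ : 0 ≤ r₂) {u q : E3} :
    (u, q) ∈ commonTangents r₁ r₂ (EuclideanSpace.single 2 l) ↔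
      u 0 ^ 2 + u 1 ^ 2 + u 2 ^ 2 = 1 ∧ u 0 * q 0 + u 1 * q 1 + u 2 * q 2 = 0 ∧
        q 0 ^ 2 + q 1 ^ 2 + q 2 ^ 2 = r₁ ^ 2 ∧
          (l * u 2) ^ 2 = l ^ 2 - 2 * (l * q 2) + r₁ ^ 2 - r₂ ^ 2 := by
  rw [mem_commonTangents_iff hr₂, ← sq_eq_sq₀ (norm_nonneg u) zero_le_one,
    ← sq_eq_sq₀ (norm_nonneg q) hr₁, EuclideanSpace.real_norm_sq_eq,
    EuclideanSpace.real_norm_sq_eq, EuclideanSpace.inner_single_left,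
    EuclideanSpace.inner_single_right]
  simp [Fin.sum_univ_three, PiLp.inner_apply]

abbrev R2 := EuclideanSpace ℝ (Fin 2)

theorem mem_sphere_iff_sq_add_sq {w : R2} : w ∈ Metric.sphere 0 1 ↔ w 0 ^ 2 + w 1 ^ 2 = 1 := by
  rw [EuclideanSpace.sphere_zero_eq _ zero_le_one]
  simp [Fin.sum_univ_two]

variable (r₁ r₂ l : ℝ)

def height (w : ℝ) : ℝ := r₁ + r₂ * w

def radial (w : ℝ) : ℝ := √(l ^ 2 - height r₁ r₂ w ^ 2)

def axial (w : ℝ) : ℝ := √(l ^ 2 - 2 * r₁ * height r₁ r₂ w + r₁ ^ 2 - r₂ ^ 2)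

/-- With `c = l e₃`, `s = height` and `D = radial`, the point `q = r₁ (D v / l, s / l)` lies on the
first sphere with `⟪q, c⟫ = r₁ s`, and `u = (R / D) e_mer + (r₂ w₁ / D) e_par`, where
`e_mer = (-(s / l) v, D / l)` and `e_par = (v₁, -v₀, 0)` are the unit meridian and parallel
directions at `q`; the choice `R = axial = l u₃` makes the line tangent to the second sphere. -/
def param (w v : R2) : E3 × E3 :=
  let s := height r₁ r₂ (w 0)
  let D := radial r₁ r₂ l (w 0)
  let R := axial r₁ r₂ l (w 0)
  (!₂[(-(R * s * v 0) / l + r₂ * w 1 * v 1) / D, (-(R * s * v 1) / l - r₂ * w 1 * v 0) / D, R / l],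
    !₂[r₁ * D * v 0 / l, r₁ * D * v 1 / l, r₁ * s / l])

/-- Inverse of `param`: `q₃` gives `s` and hence `w₀`, the third coordinate of `u × q` is
`r₁ r₂ w₁ / l`, and `v` is the normalised horizontal part of `q`. -/
def coords (x : E3 × E3) : R2 × R2 :=
  let w₀ := (l * x.2 2 / r₁ - r₁) / r₂
  let D := radial r₁ r₂ l w₀
  (!₂[w₀, l * (x.1 0 * x.2 1 - x.1 1 * x.2 0) / (r₁ * r₂)],
    !₂[l * x.2 0 / (r₁ * D), l * x.2 1 / (r₁ * D)])

variable {r₁ r₂ l} {w : ℝ}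

section Scalar
variable (hr₁ : 0 ≤ r₁) (hr₂ : 0 ≤ r₂) (hl : r₁ + r₂ < l) (hw : w ^ 2 ≤ 1)
include hr₁ hr₂ hl hw

theorem radial_sq_pos : 0 < l ^ 2 - height r₁ r₂ w ^ 2 := by
  have ⟨hw₁, hw₂⟩ : -1 ≤ w ∧ w ≤ 1 := abs_le.1 (abs_le_one_iff_mul_self_le_one.2 (by nlinarith))
  unfold height
  nlinarith [mul_le_mul_of_nonneg_left hw₂ hr₂, mul_le_mul_of_nonneg_left hw₁ hr₂]

theorem axial_sq_pos : 0 < l ^ 2 - 2 * r₁ * height r₁ r₂ w + r₁ ^ 2 - r₂ ^ 2 := by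
  have : w ≤ 1 := (abs_le.1 (abs_le_one_iff_mul_self_le_one.2 (by nlinarith))).2
  unfold height
  nlinarith [mul_le_mul_of_nonneg_left this (mul_nonneg hr₁ hr₂)]

theorem radial_sq : radial r₁ r₂ l w ^ 2 = l ^ 2 - height r₁ r₂ w ^ 2 :=
  Real.sq_sqrt (radial_sq_pos hr₁ hr₂ hl hw).le

theorem radial_pos : 0 < radial r₁ r₂ l w := Real.sqrt_pos.2 (radial_sq_pos hr₁ hr₂ hl hw)

theorem axial_sq : axial r₁ r₂ l w ^ 2 = l ^ 2 - 2 * r₁ * height r₁ r₂ w + r₁ ^ 2 - r₂ ^ 2 :=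
  Real.sq_sqrt (axial_sq_pos hr₁ hr₂ hl hw).le

theorem axial_pos : 0 < axial r₁ r₂ l w := Real.sqrt_pos.2 (axial_sq_pos hr₁ hr₂ hl hw)

end Scalar

section Param
variable (hr₁ : 0 < r₁) (hr₂ : 0 < r₂) (hl : r₁ + r₂ < l) {w v : R2}
  (hw : w ∈ Metric.sphere 0 1) (hv : v ∈ Metric.sphere 0 1)
include hr₁ hr₂ hl hw hv

theorem param_mem : param r₁ r₂ l w v ∈ commonTangents r₁ r₂ (EuclideanSpace.single 2 l) := by
  rw [mem_sphere_iff_sq_add_sq] at hw hv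
  have hw₀ : w 0 ^ 2 ≤ 1 := by nlinarith
  have hD := radial_sq hr₁.le hr₂.le hl hw₀
  have hD₀ := (radial_pos hr₁.le hr₂.le hl hw₀).ne'
  have hR := axial_sq hr₁.le hr₂.le hl hw₀
  have hs : height r₁ r₂ (w 0) = r₁ + r₂ * w 0 := rfl
  have hl₀ : l ≠ 0 := by linarith
  rw [param, mem_commonTangents_single_iff hr₁.le hr₂.le]
  simp only [Matrix.cons_val_zero, Matrix.cons_val_one, Matrix.cons_val_two,
    Matrix.head_cons, Matrix.tail_cons]
  set s := height r₁ r₂ (w 0)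
  set D := radial r₁ r₂ l (w 0)
  set R := axial r₁ r₂ l (w 0)
  refine ⟨?_, ?_, ?_, ?_⟩ <;> field_simp
  · linear_combination (R ^ 2 * s ^ 2 + l ^ 2 * r₂ ^ 2 * w 1 ^ 2) * hv + (R ^ 2 - l ^ 2) * hD +
      l ^ 2 * hR + r₂ ^ 2 * l ^ 2 * hw + l ^ 2 * (s - r₁ + r₂ * w 0) * hs
  · linear_combination (-(r₁ * R * s)) * hv
  · linear_combination D ^ 2 * hv + hD
  · linear_combination hR

omit hv in
theorem param_fst_two_pos : 0 < (param r₁ r₂ l w v).1 2 := by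
  have hw₀ : w 0 ^ 2 ≤ 1 := by nlinarith [mem_sphere_iff_sq_add_sq.1 hw, sq_nonneg (w 1)]
  have := axial_pos hr₁.le hr₂.le hl hw₀
  have : 0 < l := by linarith
  simp only [param, Matrix.cons_val_two, Matrix.tail_cons, Matrix.head_cons]
  positivity

theorem coords_param : coords r₁ r₂ l (param r₁ r₂ l w v) = (w, v) := by
  rw [mem_sphere_iff_sq_add_sq] at hw hv
  have hw₀ : w 0 ^ 2 ≤ 1 := by nlinarith
  have hD₀ := (radial_pos hr₁.le hr₂.le hl hw₀).ne'
  have hl₀ : l ≠ 0 := by linarith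
  have hw₀' : (l * (param r₁ r₂ l w v).2 2 / r₁ - r₁) / r₂ = w 0 := by
    simp only [param, Matrix.cons_val_two, Matrix.tail_cons, Matrix.head_cons, height]
    field_simp
    ring
  simp only [coords, hw₀']
  simp only [param, Matrix.cons_val_zero, Matrix.cons_val_one]
  set D := radial r₁ r₂ l (w 0)
  ext i <;> fin_cases i <;>
    simp only [Fin.zero_eta, Fin.mk_one, Matrix.cons_val_zero, Matrix.cons_val_one,
      Matrix.cons_val_fin_one] <;> field_simp
  · linear_combination (l * r₂ * w 1) * hv

end Param

section Coords
variable (hr₁ : 0 < r₁) (hr₂ : 0 < r₂) (hl : r₁ + r₂ < l) {u q : E3}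
  (hx : (u, q) ∈ commonTangents r₁ r₂ (EuclideanSpace.single 2 l))
include hr₁ hr₂ hl hx

theorem fst_two_ne_zero : u 2 ≠ 0 := by
  have hl₀ : 0 < l := by linarith
  have := inner_ne_zero_of_mem_commonTangents hr₂.le
    (by rwa [PiLp.norm_single, Real.norm_of_nonneg hl₀.le]) hx
  rw [EuclideanSpace.inner_single_left] at this
  exact right_ne_zero_of_mul (by simpa using this)

omit hl in
theorem coords_fst_mem : (coords r₁ r₂ l (u, q)).1 ∈ Metric.sphere 0 1 := by
  obtain ⟨e₁, e₂, e₃, e₄⟩ := (mem_commonTangents_single_iff hr₁.le hr₂.le).1 hx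
  rw [mem_sphere_iff_sq_add_sq]
  simp only [coords, Matrix.cons_val_zero, Matrix.cons_val_one]
  field_simp
  linear_combination (l ^ 2 * (u 0 ^ 2 + u 1 ^ 2)) * e₃ + (l ^ 2 * (r₁ ^ 2 - q 2 ^ 2)) * e₁ +
    (-(l ^ 2) * (q 0 * u 0 + q 1 * u 1 - q 2 * u 2)) * e₂ - r₁ ^ 2 * e₄

theorem radial_coords :
    0 < radial r₁ r₂ l ((l * q 2 / r₁ - r₁) / r₂) ∧
      r₁ ^ 2 * radial r₁ r₂ l ((l * q 2 / r₁ - r₁) / r₂) ^ 2 = l ^ 2 * (r₁ ^ 2 - q 2 ^ 2) := by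
  have hw := coords_fst_mem hr₁ hr₂ hx
  rw [mem_sphere_iff_sq_add_sq] at hw
  simp only [coords, Matrix.cons_val_zero, Matrix.cons_val_one] at hw
  have hw₀ : ((l * q 2 / r₁ - r₁) / r₂) ^ 2 ≤ 1 := by nlinarith
  refine ⟨radial_pos hr₁.le hr₂.le hl hw₀, ?_⟩
  rw [radial_sq hr₁.le hr₂.le hl hw₀, height]
  field_simp
  ring

theorem coords_snd_mem : (coords r₁ r₂ l (u, q)).2 ∈ Metric.sphere 0 1 := by
  obtain ⟨-, -, e₃, -⟩ := (mem_commonTangents_single_iff hr₁.le hr₂.le).1 hx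
  obtain ⟨hD₀, hD⟩ := radial_coords hr₁ hr₂ hl hx
  rw [mem_sphere_iff_sq_add_sq]
  simp only [coords, Matrix.cons_val_zero, Matrix.cons_val_one]
  set D := radial r₁ r₂ l ((l * q 2 / r₁ - r₁) / r₂)
  field_simp
  linear_combination -hD + l ^ 2 * e₃

theorem param_coords (hu : 0 < u 2) :
    param r₁ r₂ l (coords r₁ r₂ l (u, q)).1 (coords r₁ r₂ l (u, q)).2 = (u, q) := by
  obtain ⟨-, e₂, e₃, e₄⟩ := (mem_commonTangents_single_iff hr₁.le hr₂.le).1 hx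
  obtain ⟨hD₀, hD⟩ := radial_coords hr₁ hr₂ hl hx
  have hl₀ : 0 < l := by linarith
  have hs : height r₁ r₂ ((l * q 2 / r₁ - r₁) / r₂) = l * q 2 / r₁ := by
    rw [height]; field_simp; ring
  have hR : axial r₁ r₂ l ((l * q 2 / r₁ - r₁) / r₂) = l * u 2 := by
    rw [axial, hs, ← Real.sqrt_sq (by positivity : 0 ≤ l * u 2), e₄]
    congr 1; field_simp
  simp only [coords, param, Matrix.cons_val_zero, Matrix.cons_val_one, hs, hR]
  set D := radial r₁ r₂ l ((l * q 2 / r₁ - r₁) / r₂)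
  ext i <;> fin_cases i <;>
    simp only [Fin.zero_eta, Fin.mk_one, Fin.reduceFinMk, Matrix.cons_val_zero,
      Matrix.cons_val_one, Matrix.cons_val] <;> field_simp
  · linear_combination -u 0 * hD + l ^ 2 * u 0 * e₃ - l ^ 2 * q 0 * e₂
  · linear_combination -u 1 * hD + l ^ 2 * u 1 * e₃ - l ^ 2 * q 1 * e₂

end Coords

abbrev Torus := Metric.sphere (0 : R2) 1 × Metric.sphere (0 : R2) 1

variable (r₁ r₂ l) in
def sumParam : Torus ⊕ Torus → E3 × E3 :=
  Sum.elim (fun p => param r₁ r₂ l p.1 p.2)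
    (fun p => (-(param r₁ r₂ l p.1 p.2).1, (param r₁ r₂ l p.1 p.2).2))

section TorusSum
variable (hr₁ : 0 < r₁) (hr₂ : 0 < r₂) (hl : r₁ + r₂ < l)
include hr₁ hr₂ hl

theorem continuous_param : Continuous fun p : Torus => param r₁ r₂ l p.1 p.2 := by
  have hD (p : Torus) : radial r₁ r₂ l (p.1.1 0) ≠ 0 :=
    (radial_pos hr₁.le hr₂.le hl
      (by nlinarith [mem_sphere_iff_sq_add_sq.1 p.1.2, sq_nonneg (p.1.1 1)])).ne'
  have : Continuous (height r₁ r₂) := by unfold height; fun_prop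
  have : Continuous (radial r₁ r₂ l) := by unfold radial; fun_prop
  have : Continuous (axial r₁ r₂ l) := by unfold axial; fun_prop
  simp only [param]
  fun_prop (disch := exact hD _)

theorem param_injective : Function.Injective fun p : Torus => param r₁ r₂ l p.1 p.2 := by
  intro p p' h
  have := congrArg (coords r₁ r₂ l) h
  simp only [coords_param hr₁ hr₂ hl p.1.2 p.2.2, coords_param hr₁ hr₂ hl p'.1.2 p'.2.2,
    Prod.mk.injEq] at this
  exact Prod.ext (Subtype.ext this.1) (Subtype.ext this.2)

theorem continuous_sumParam : Continuous (sumParam r₁ r₂ l) :=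
  have h := continuous_param hr₁ hr₂ hl
  h.sumElim (h.fst.neg.prodMk h.snd)

theorem sumParam_injective : Function.Injective (sumParam r₁ r₂ l) := by
  have hpos (p : Torus) := param_fst_two_pos hr₁ hr₂ hl p.1.2 (v := p.2)
  rintro (p | p) (p' | p') h <;>
    simp only [sumParam, Sum.elim_inl, Sum.elim_inr, Sum.inl.injEq, Sum.inr.injEq] at h ⊢
  · exact param_injective hr₁ hr₂ hl h
  case inl.inr | inr.inl =>
    have h₂ := congrArg (fun x : E3 × E3 => x.1 2) h
    simp only [PiLp.neg_apply] at h₂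
    linarith [hpos p, hpos p']
  · rw [Prod.mk.injEq, neg_inj] at h
    exact param_injective hr₁ hr₂ hl (Prod.ext h.1 h.2)

theorem range_sumParam :
    Set.range (sumParam r₁ r₂ l) = commonTangents r₁ r₂ (EuclideanSpace.single 2 l) := by
  refine Set.Subset.antisymm (Set.range_subset_iff.2 ?_) fun ⟨u, q⟩ hx => ?_
  · rintro (p | p)
    · exact param_mem hr₁ hr₂ hl p.1.2 p.2.2
    · exact neg_fst_mem_commonTangents (param_mem hr₁ hr₂ hl p.1.2 p.2.2)
  rcases (fst_two_ne_zero hr₁ hr₂ hl hx).lt_or_gt with hu | hu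
  · have hx' := neg_fst_mem_commonTangents hx
    refine ⟨Sum.inr (⟨_, coords_fst_mem hr₁ hr₂ hx'⟩, ⟨_, coords_snd_mem hr₁ hr₂ hl hx'⟩), ?_⟩
    have := param_coords hr₁ hr₂ hl hx' (by simpa using hu)
    simp only [sumParam, Sum.elim_inr, this, neg_neg]
  · exact ⟨Sum.inl (⟨_, coords_fst_mem hr₁ hr₂ hx⟩, ⟨_, coords_snd_mem hr₁ hr₂ hl hx⟩),
      param_coords hr₁ hr₂ hl hx hu⟩

def torusSumHomeomorph :
    (Torus ⊕ Torus) ≃ₜ commonTangents r₁ r₂ (EuclideanSpace.single (2 : Fin 3) l) :=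
  ((continuous_sumParam hr₁ hr₂ hl).isClosedEmbedding
    (sumParam_injective hr₁ hr₂ hl)).isEmbedding.toHomeomorph.trans
    (Homeomorph.setCongr (range_sumParam hr₁ hr₂ hl))

end TorusSum

end CommonTangents

end

/-- If ‖c‖ > r₁ + r₂ (disjoint spheres lying outside one another), the set of oriented
common tangent lines to the two spheres (a line being encoded by its unit direction u and
the point q of the line closest to the origin) is homeomorphic to the disjoint union of
two copies of the 2-torus S¹ × S¹. -/
theorem stmt16 (r₁ r₂ : ℝ) (h12 : r₁ ≥ r₂) (h2 : 0 < r₂)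
    (c : EuclideanSpace ℝ (Fin 3)) (hc : r₁ + r₂ < ‖c‖) :
    Nonempty
      ((({p : EuclideanSpace ℝ (Fin 3) × EuclideanSpace ℝ (Fin 3) |
          ‖p.1‖ = 1 ∧ ⟪p.2, p.1⟫ = 0 ∧ ‖p.2‖ = r₁ ∧
            ‖(p.2 - c) - ⟪p.2 - c, p.1⟫ • p.1‖ = r₂} :
          Set (EuclideanSpace ℝ (Fin 3) × EuclideanSpace ℝ (Fin 3)))) ≃ₜ
        ((Metric.sphere (0 : EuclideanSpace ℝ (Fin 2)) 1 ×
            Metric.sphere (0 : EuclideanSpace ℝ (Fin 2)) 1) ⊕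
          (Metric.sphere (0 : EuclideanSpace ℝ (Fin 2)) 1 ×
            Metric.sphere (0 : EuclideanSpace ℝ (Fin 2)) 1))) := by
  set Φ := (ℝ ∙ (c - EuclideanSpace.single 2 ‖c‖))ᗮ.reflection
  have hΦ : Φ c = EuclideanSpace.single 2 ‖c‖ := Submodule.reflection_sub (by simp)
  exact ⟨(Φ.commonTangentsHomeomorph r₁ r₂ c).trans <| (Homeomorph.setCongr (by rw [hΦ])).trans
    (CommonTangents.torusSumHomeomorph (h2.trans_le h12) h2 hc).symm⟩
end
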